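/- arXiv:1903.02836 — 2 statements merged into one kernel-verified Lean document; each statement's English description precedes it below -/
import Mathlib

section
/- Let n be even and 1 ≤ m ≤ n/2. For the function I_m(x) = (x_{2m+2} x_{2m+4} ⋯ x_n)/(x_{2m+1} x_{2m+3} ⋯ x_{n−1}) (with I_{n/2} = 1) and every x in the positive orthant (0,∞)^n, the log-canonical Poisson bracket satisfies {I_m, x_j}(x) = −I_m(x) x_j if j > 2m, and {I_m, x_j}(x) = 0 if j ≤ 2m. -/
/-- Partial derivative `∂f/∂x_i` of a function on `ℝⁿ`. -/
noncomputable def pd {n : ℕ} (f : (Fin n → ℝ) → ℝ) (x : Fin n → ℝ) (i : Fin n) : ℝ :=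
  fderiv ℝ f x (Pi.single i 1)

/-- The log-canonical Poisson bracket
`{f,g}(x) = Σ_{i<j} x_i x_j (∂f/∂x_i ∂g/∂x_j − ∂f/∂x_j ∂g/∂x_i)`. -/
noncomputable def pb {n : ℕ} (f g : (Fin n → ℝ) → ℝ) (x : Fin n → ℝ) : ℝ :=
  ∑ i : Fin n, ∑ j : Fin n,
    if i < j then x i * x j * (pd f x i * pd g x j - pd f x j * pd g x i) else 0

/-- `J_m(x) = (x_1 x_3 ⋯ x_{2m−1})/(x_2 x_4 ⋯ x_{2m})` (1-based; here indices are 0-based,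
so the numerator ranges over even indices `< 2m` and the denominator over odd indices `< 2m`). -/
noncomputable def Jfun {n : ℕ} (m : ℕ) (x : Fin n → ℝ) : ℝ :=
  (∏ i ∈ Finset.univ.filter (fun i : Fin n => i.val < 2*m ∧ Even i.val), x i) /
  (∏ i ∈ Finset.univ.filter (fun i : Fin n => i.val < 2*m ∧ Odd i.val), x i)

/-- `I_m(x) = (x_{2m+2} x_{2m+4} ⋯ x_n)/(x_{2m+1} x_{2m+3} ⋯ x_{n−1})` (1-based; here 0-based:
numerator over odd indices `≥ 2m`, denominator over even indices `≥ 2m`). -/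
noncomputable def Ifun {n : ℕ} (m : ℕ) (x : Fin n → ℝ) : ℝ :=
  (∏ i ∈ Finset.univ.filter (fun i : Fin n => 2*m ≤ i.val ∧ Odd i.val), x i) /
  (∏ i ∈ Finset.univ.filter (fun i : Fin n => 2*m ≤ i.val ∧ Even i.val), x i)

/-- `v_m(x) = a_1 x_1 + ⋯ + a_m x_m` (sum of the first `m` coordinates, 0-based indices `< m`). -/
def vfun {n : ℕ} (a : Fin n → ℝ) (m : ℕ) (x : Fin n → ℝ) : ℝ :=
  ∑ j ∈ Finset.univ.filter (fun j : Fin n => j.val < m), a j * x j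

/-- `F_m = v_{2m} I_m`. -/
noncomputable def Ffun {n : ℕ} (a : Fin n → ℝ) (m : ℕ) (x : Fin n → ℝ) : ℝ :=
  vfun a (2*m) x * Ifun m x

/-- The Hamiltonian `H(x) = Σ_i (a_i x_i + k_i log x_i)`. -/
noncomputable def Hfun {n : ℕ} (a k : Fin n → ℝ) (x : Fin n → ℝ) : ℝ :=
  ∑ i, (a i * x i + k i * Real.log (x i))

/-!
`I_m` is a Laurent monomial whose exponent at `x_i` (0-based) is `+1` for odd `i ≥ 2m`, `-1` for
even `i ≥ 2m` and `0` below `2m`. By Euler's identity `x_i ∂_i I_m = e_i I_m`, the bracket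
with a coordinate is `{I_m, x_j} = I_m x_j (∑_{i<j} e_i - ∑_{i>j} e_i)`. The exponents cancel in
consecutive pairs `(2m, 2m+1), (2m+2, 2m+3), …`, so every partial sum `∑_{i<t} e_i` is `-1` or `0`
according as `t > 2m` is odd or not, and the full sum vanishes because `n` is even.
-/

open Finset

lemma pd_coord {n : ℕ} (x : Fin n → ℝ) (i j : Fin n) :
    pd (fun y => y j) x i = if i = j then 1 else 0 := by
  rw [pd, (hasFDerivAt_apply j x).fderiv]
  simp [Pi.single_apply, eq_comm]

lemma hasFDerivAt_prod_coord {n : ℕ} (s : Finset (Fin n)) (x : Fin n → ℝ) :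
    HasFDerivAt (fun y : Fin n → ℝ => ∏ k ∈ s, y k)
      (∑ k ∈ s, (∏ l ∈ s.erase k, x l) • (ContinuousLinearMap.proj k : (Fin n → ℝ) →L[ℝ] ℝ)) x :=
  HasFDerivAt.finsetProd fun k _ => hasFDerivAt_apply k x

lemma mul_pd_prod_coord {n : ℕ} (s : Finset (Fin n)) (x : Fin n → ℝ) (i : Fin n) :
    x i * pd (fun y => ∏ k ∈ s, y k) x i = (if i ∈ s then 1 else 0) * ∏ k ∈ s, x k := by
  rw [pd, (hasFDerivAt_prod_coord s x).fderiv]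
  simp only [FunLike.coe_sum, Finset.sum_apply, FunLike.coe_smul, Pi.smul_apply,
    ContinuousLinearMap.proj_apply, Pi.single_apply, smul_eq_mul, mul_ite, mul_one, mul_zero,
    sum_ite_eq']
  split_ifs with hi
  · rw [one_mul, mul_prod_erase s x hi]
  · simp

lemma pd_div {n : ℕ} {f g : (Fin n → ℝ) → ℝ} {x : Fin n → ℝ} (hf : DifferentiableAt ℝ f x)
    (hg : DifferentiableAt ℝ g x) (hgx : g x ≠ 0) (i : Fin n) :
    pd (fun y => f y / g y) x i = (pd f x i * g x - f x * pd g x i) / g x ^ 2 := by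
  have h : HasFDerivAt (fun y => f y / g y) _ x :=
    hf.hasFDerivAt.fun_mul ((hasFDerivAt_inv hgx).comp x hg.hasFDerivAt)
  rw [pd, h.fderiv]
  simp only [add_apply, smul_apply,
    ContinuousLinearMap.comp_apply, ContinuousLinearMap.toSpanSingleton_apply, smul_eq_mul,
    mul_neg, pd]
  field_simp
  ring

lemma mul_pd_div_of_mul_pd {n : ℕ} {f g : (Fin n → ℝ) → ℝ} {x : Fin n → ℝ} {i : Fin n} {a b : ℝ}
    (hf : DifferentiableAt ℝ f x) (hg : DifferentiableAt ℝ g x) (hgx : g x ≠ 0)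
    (hfi : x i * pd f x i = a * f x) (hgi : x i * pd g x i = b * g x) :
    x i * pd (fun y => f y / g y) x i = (a - b) * (f x / g x) := by
  rw [pd_div hf hg hgx]
  field_simp
  linear_combination g x * hfi - f x * hgi

lemma mul_pd_prod_div_prod {n : ℕ} (s t : Finset (Fin n)) {x : Fin n → ℝ}
    (ht : ∏ k ∈ t, x k ≠ 0) (i : Fin n) :
    x i * pd (fun y => (∏ k ∈ s, y k) / ∏ k ∈ t, y k) x i
      = ((if i ∈ s then 1 else 0) - (if i ∈ t then 1 else 0)) * ((∏ k ∈ s, x k) / ∏ k ∈ t, x k) :=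
  mul_pd_div_of_mul_pd (hasFDerivAt_prod_coord s x).differentiableAt
    (hasFDerivAt_prod_coord t x).differentiableAt ht (mul_pd_prod_coord s x i)
    (mul_pd_prod_coord t x i)

lemma pb_coord {n : ℕ} (f : (Fin n → ℝ) → ℝ) (x : Fin n → ℝ) (j : Fin n) :
    pb f (fun y => y j) x = x j * ((∑ i, if i < j then x i * pd f x i else 0)
      - ∑ k, if j < k then x k * pd f x k else 0) := by
  have hterm : ∀ i k, (if i < k then x i * x k * (pd f x i * pd (fun y => y j) x k
      - pd f x k * pd (fun y => y j) x i) else 0) =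
      (if k = j then (if i < j then x j * (x i * pd f x i) else 0) else 0)
      - (if i = j then (if j < k then x j * (x k * pd f x k) else 0) else 0) := by
    intro i k
    rw [pd_coord, pd_coord]
    split_ifs <;> simp_all <;> ring
  rw [pb]
  simp only [hterm, sum_sub_distrib]
  rw [sum_comm (f := fun i k => if i = j then _ else _)]
  simp only [sum_ite_eq', mem_univ, if_true, mul_sum, mul_sub, mul_ite, mul_zero]

lemma sum_fin_ite_lt (g : ℕ → ℝ) {n t : ℕ} (ht : t ≤ n) :
    (∑ i : Fin n, if i.val < t then g i else 0) = ∑ s ∈ range t, g s := by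
  rw [Fin.sum_univ_eq_sum_range (fun s => if s < t then g s else 0), ← sum_filter]
  congr 1
  ext s
  simp only [mem_filter, mem_range]
  omega

lemma pb_coord_eq_of_mul_pd {n : ℕ} {f : (Fin n → ℝ) → ℝ} {x : Fin n → ℝ} (e : ℕ → ℝ)
    (he : ∀ i : Fin n, x i * pd f x i = e i * f x) (j : Fin n) :
    pb f (fun y => y j) x = f x * x j *
      (∑ t ∈ range j, e t + ∑ t ∈ range (j + 1), e t - ∑ t ∈ range n, e t) := by
  have hlt : (∑ i, if i < j then x i * pd f x i else 0) = f x * ∑ t ∈ range j, e t := by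
    rw [← sum_fin_ite_lt e j.isLt.le, mul_sum]
    refine sum_congr rfl fun i _ => ?_
    rw [he, mul_ite, mul_zero, mul_comm (f x)]
    exact if_congr Fin.lt_def rfl rfl
  have hgt : (∑ k, if j < k then x k * pd f x k else 0)
      = f x * (∑ t ∈ range n, e t - ∑ t ∈ range (j + 1), e t) := by
    rw [sum_range e, ← sum_fin_ite_lt e j.isLt, ← sum_sub_distrib, mul_sum]
    refine sum_congr rfl fun k _ => ?_
    rw [he]
    split_ifs <;> simp only [Fin.lt_def] at * <;> first | omega | ring
  rw [pb_coord, hlt, hgt]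
  ring

noncomputable def ifunExponent (m i : ℕ) : ℝ := if 2 * m ≤ i then (if Odd i then 1 else -1) else 0

lemma mul_pd_Ifun {n : ℕ} (m : ℕ) {x : Fin n → ℝ} (hx : ∀ i, 0 < x i) (i : Fin n) :
    x i * pd (Ifun m) x i = ifunExponent m i * Ifun m x := by
  refine (mul_pd_prod_div_prod _ _ (prod_pos fun k _ => hx k).ne' i).trans ?_
  congr 1
  simp only [ifunExponent, mem_filter, mem_univ, true_and]
  rcases Nat.even_or_odd i.val with hi | hi
  · simp [hi, Nat.not_odd_iff_even.mpr hi, apply_ite]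
  · simp [hi, Nat.not_even_iff_odd.mpr hi]

lemma sum_range_ifunExponent (m T : ℕ) :
    ∑ t ∈ range T, ifunExponent m t = if 2 * m < T ∧ Odd T then -1 else 0 := by
  induction T with
  | zero => simp
  | succ T ih =>
    rw [sum_range_succ, ih, ifunExponent]
    simp only [Nat.odd_iff]
    split_ifs <;> first | omega | norm_num

theorem stmt_5_general (N : ℕ) (m : ℕ)
    (x : Fin (2*N) → ℝ) (hx : ∀ i, 0 < x i) (j : Fin (2*N)) :
    (2*m ≤ j.val → pb (Ifun m) (fun y => y j) x = -(Ifun m x * x j)) ∧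
    (j.val < 2*m → pb (Ifun m) (fun y => y j) x = 0) := by
  rw [pb_coord_eq_of_mul_pd (ifunExponent m) (mul_pd_Ifun m hx) j, sum_range_ifunExponent,
    sum_range_ifunExponent, sum_range_ifunExponent]
  simp only [Nat.odd_iff]
  constructor <;> intro hj <;> split_ifs <;> first | omega | ring

/-- For even `n = 2N` and `1 ≤ m ≤ N`: `{I_m, x_j} = −I_m x_j` for (1-based) `j > 2m`
(0-based `2m ≤ j.val`) and `{I_m, x_j} = 0` for `j ≤ 2m`. -/
theorem stmt_5 (N : ℕ) (m : ℕ) (hm1 : 1 ≤ m) (hm2 : m ≤ N)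
    (x : Fin (2*N) → ℝ) (hx : ∀ i, 0 < x i) (j : Fin (2*N)) :
    (2*m ≤ j.val → pb (Ifun m) (fun y => y j) x = -(Ifun m x * x j)) ∧
    (j.val < 2*m → pb (Ifun m) (fun y => y j) x = 0) :=
  stmt_5_general N m x hx j
end

section
/- Let n = 5 and a, k ∈ ℝ^5, and define F(x) = (x_5/x_4)(a_1 x_1 + a_2 x_2 + a_3 x_3) and H(x) = Σ_{i=1}^5 (a_i x_i + k_i log x_i) on (0,∞)^5. Then the log-canonical Poisson bracket satisfies {F, H}(x) = (x_5/x_4)(a_1(k_2+k_3) x_1 + a_2(k_3−k_1) x_2 − a_3(k_1+k_2) x_3) for all x ∈ (0,∞)^5; consequently, {F, H}(x) = 0 for all x ∈ (0,∞)^5 if and only if a_1(k_2+k_3) = a_2(k_3−k_1) = a_3(k_1+k_2) = 0. -/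
/-!
Both gradients are explicit (`∂H/∂x_j = a_j + k_j / x_j`, and `F` is `x_5 / x_4` times a linear
form), so the bracket formula is a rational identity. Being `x_5 / x_4` times a linear form in
`x_1, x_2, x_3`, the bracket vanishes on the orthant exactly when that form has zero coefficients,
as testing at `(1,1,1)`, `(2,1,1)` and `(1,2,1)` shows.
-/

lemma hasFDerivAt_Hfun {n : ℕ} (a k x : Fin n → ℝ) (hx : ∀ i, x i ≠ 0) :
    HasFDerivAt (Hfun a k)
      (∑ i, (a i + k i / x i) •
        ContinuousLinearMap.proj (R := ℝ) (φ := fun _ : Fin n => ℝ) i) x := by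
  refine HasFDerivAt.fun_sum fun i _ => ?_
  have hlog : HasDerivAt (fun t => a i * t + k i * Real.log t) (a i + k i / x i) (x i) := by
    simpa [div_eq_mul_inv] using ((hasDerivAt_id (x i)).const_mul (a i)).fun_add
      ((Real.hasDerivAt_log (hx i)).const_mul (k i))
  exact hlog.comp_hasFDerivAt x (hasFDerivAt_apply (𝕜 := ℝ) (F' := fun _ => ℝ) i x)

lemma pd_Hfun {n : ℕ} (a k x : Fin n → ℝ) (hx : ∀ i, x i ≠ 0) (j : Fin n) :
    pd (Hfun a k) x j = a j + k j / x j := by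
  simp [pd, (hasFDerivAt_Hfun a k x hx).fderiv, Pi.single_apply]

lemma pd_ratio_mul_linear (a x : Fin 5 → ℝ) (h3 : x 3 ≠ 0) :
    pd (fun y : Fin 5 → ℝ => y 4 / y 3 * (a 0 * y 0 + a 1 * y 1 + a 2 * y 2)) x =
      ![x 4 / x 3 * a 0, x 4 / x 3 * a 1, x 4 / x 3 * a 2,
        -((a 0 * x 0 + a 1 * x 1 + a 2 * x 2) * (x 4 / x 3 ^ 2)),
        (a 0 * x 0 + a 1 * x 1 + a 2 * x 2) / x 3] := by
  have p (i : Fin 5) := hasFDerivAt_apply (𝕜 := ℝ) i x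
  have hF : HasFDerivAt
      (fun y : Fin 5 → ℝ => y 4 / y 3 * (a 0 * y 0 + a 1 * y 1 + a 2 * y 2)) _ x :=
    ((p 4).mul ((hasDerivAt_inv h3).comp_hasFDerivAt x (p 3))).mul
      ((((p 0).const_mul (a 0)).add ((p 1).const_mul (a 1))).add ((p 2).const_mul (a 2)))
  funext i
  rw [pd, hF.fderiv]
  fin_cases i <;> simp [div_eq_mul_inv]

lemma pb_ratio_mul_linear_Hfun (a k x : Fin 5 → ℝ) (hx : ∀ i, x i ≠ 0) :
    pb (fun y : Fin 5 → ℝ => y 4 / y 3 * (a 0 * y 0 + a 1 * y 1 + a 2 * y 2)) (Hfun a k) x =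
      x 4 / x 3 *
        (a 0 * (k 1 + k 2) * x 0 + a 1 * (k 2 - k 0) * x 1 - a 2 * (k 0 + k 1) * x 2) := by
  simp only [pb, Fin.sum_univ_five, Fin.reduceLT, lt_self_iff_false, ↓reduceIte, add_zero,
    zero_add, pd_ratio_mul_linear a x (hx 3), pd_Hfun a k x hx, Matrix.cons_val]
  field_simp [hx 0, hx 1, hx 2, hx 3]
  ring

lemma eq_zero_of_forall_pos_linear {c₀ c₁ c₂ : ℝ}
    (h : ∀ y₀ y₁ y₂ : ℝ, 0 < y₀ → 0 < y₁ → 0 < y₂ → c₀ * y₀ + c₁ * y₁ + c₂ * y₂ = 0) :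
    c₀ = 0 ∧ c₁ = 0 ∧ c₂ = 0 := by
  have h₁ := h 1 1 1 one_pos one_pos one_pos
  have h₂ := h 2 1 1 two_pos one_pos one_pos
  have h₃ := h 1 2 1 one_pos two_pos one_pos
  exact ⟨by linarith, by linarith, by linarith⟩

/-- The `n = 5` example from the appendix: with `F(x) = (x_5/x_4)(a_1 x_1 + a_2 x_2 + a_3 x_3)`
and `H(x) = Σ_i (a_i x_i + k_i log x_i)`, one has
`{F, H} = (x_5/x_4)(a_1(k_2+k_3)x_1 + a_2(k_3−k_1)x_2 − a_3(k_1+k_2)x_3)` on the positive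
orthant; consequently `F` is a first integral iff
`a_1(k_2+k_3) = a_2(k_3−k_1) = a_3(k_1+k_2) = 0`. (Indices here are 0-based.) -/
theorem stmt_19 (a k : Fin 5 → ℝ)
    (F : (Fin 5 → ℝ) → ℝ)
    (hF : F = fun y => y 4 / y 3 * (a 0 * y 0 + a 1 * y 1 + a 2 * y 2)) :
    (∀ x : Fin 5 → ℝ, (∀ i, 0 < x i) →
      pb F (Hfun a k) x = x 4 / x 3 *
        (a 0 * (k 1 + k 2) * x 0 + a 1 * (k 2 - k 0) * x 1 - a 2 * (k 0 + k 1) * x 2)) ∧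
    ((∀ x : Fin 5 → ℝ, (∀ i, 0 < x i) → pb F (Hfun a k) x = 0) ↔
      (a 0 * (k 1 + k 2) = 0 ∧ a 1 * (k 2 - k 0) = 0 ∧ a 2 * (k 0 + k 1) = 0)) := by
  subst hF
  have hbracket (x : Fin 5 → ℝ) (hx : ∀ i, 0 < x i) :=
    pb_ratio_mul_linear_Hfun a k x fun i => (hx i).ne'
  refine ⟨hbracket, fun h => ?_, fun ⟨h₀, h₁, h₂⟩ x hx => by rw [hbracket x hx, h₀, h₁, h₂]; ring⟩
  have hlinear (y₀ y₁ y₂ : ℝ) (hy₀ : 0 < y₀) (hy₁ : 0 < y₁) (hy₂ : 0 < y₂) :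
      a 0 * (k 1 + k 2) * y₀ + a 1 * (k 2 - k 0) * y₁ + -(a 2 * (k 0 + k 1)) * y₂ = 0 := by
    have hy : ∀ i, 0 < ![y₀, y₁, y₂, 1, 1] i := by intro i; fin_cases i <;> simp [*]
    simpa [hbracket _ hy, sub_eq_add_neg] using h _ hy
  obtain ⟨h₀, h₁, h₂⟩ := eq_zero_of_forall_pos_linear hlinear
  exact ⟨h₀, h₁, neg_eq_zero.mp h₂⟩
end
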